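/- Let p ∈ ℂ^N satisfy rank H_{L}(p) ≤ r < min(L, N−L+1) for some window length L. Then rank H_{L}(p) = rank H_{r+1}(p); in particular the rank-deficiency of one Hankel window implies the (r+1)-row Hankel matrix of the same sequence has the same rank. -/

import Mathlib

/-- The `L × K` Hankel matrix of a sequence `p` of length `N`, where `L + K = N + 1`. -/
def hankel {α : Type*} {N : ℕ} (L K : ℕ) (h : L + K = N + 1) (p : Fin N → α) :
    Matrix (Fin L) (Fin K) α :=
  Matrix.of fun i j => p ⟨i.val + j.val, by have hi := i.isLt; have hj := j.isLt; omega⟩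

/-!
If `x ᵥ* H_{L,K+1}(p) = 0`, then both `x` padded by a trailing zero and `x` shifted by one place
lie in the left kernel of `H_{L+1,K}(p)`. When the left kernel of `H_{L,K+1}(p)` is nonzero, the
shifted copies are not all among the padded ones, so the left nullity grows by at least one and
`rank H_{L+1,K}(p) ≤ rank H_{L,K+1}(p)`. Transposing gives the reverse inequality as soon as the
columns of `H_{L+1,K}(p)` are dependent, so the rank stays constant while it is below both
dimensions, and one descends from `L` rows to `r + 1` rows.
-/

open Matrix Module Submodule

namespace Matrix

variable {α o : Type*} [NonUnitalNonAssocSemiring α] {n : ℕ}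

theorem snoc_zero_vecMul (v : Fin n → α) (B : Matrix (Fin (n + 1)) o α) :
    (Fin.snoc v 0 : Fin (n + 1) → α) ᵥ* B = v ᵥ* B.submatrix Fin.castSucc id := by
  ext j
  simp [vecMul, dotProduct, Fin.sum_univ_castSucc]

theorem cons_zero_vecMul (v : Fin n → α) (B : Matrix (Fin (n + 1)) o α) :
    (Fin.cons 0 v : Fin (n + 1) → α) ᵥ* B = v ᵥ* B.submatrix Fin.succ id := by
  ext j
  simp [vecMul, dotProduct, Fin.sum_univ_succ]

theorem vecMul_submatrix_id {m k : Type*} [Fintype m] (v : m → α) (A : Matrix m o α)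
    (e : k → o) : v ᵥ* A.submatrix id e = (v ᵥ* A) ∘ e :=
  rfl

theorem rank_add_finrank_ker_vecMulLinear {R m : Type*} [Field R] [Fintype m] [Fintype o]
    (A : Matrix m o R) : A.rank + finrank R (LinearMap.ker A.vecMulLinear) = Fintype.card m := by
  rw [← rank_transpose, rank, mulVecLin_transpose, LinearMap.finrank_range_add_finrank_ker,
    finrank_fintype_fun_eq_card]

end Matrix

/-- Reading `Fin n → R` as polynomials of degree `< n`, `Fin.snoc x 0` is `x` and `Fin.cons 0 x`
is `X * x`; a nonzero `V` is not stable under multiplication by `X`, as an element of maximal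
degree shows. -/
theorem exists_cons_zero_ne_snoc_zero {R : Type*} [Field R] {n : ℕ}
    {V : Submodule R (Fin n → R)} (hV : V ≠ ⊥) :
    ∃ x ∈ V, ∀ y ∈ V, (Fin.snoc y 0 : Fin (n + 1) → R) ≠ Fin.cons 0 x := by
  classical
  obtain ⟨x₀, hx₀, hx₀ne⟩ := exists_mem_ne_zero_of_ne_bot hV
  obtain ⟨i₀, hi₀⟩ := Function.ne_iff.mp hx₀ne
  obtain ⟨d, hd, hdmax⟩ :=
    (Finset.univ.filter fun i => ∃ x ∈ V, x i ≠ 0).exists_max_image id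
      ⟨i₀, by simpa using ⟨x₀, hx₀, hi₀⟩⟩
  obtain ⟨x, hxV, hxd⟩ := (Finset.mem_filter.mp hd).2
  refine ⟨x, hxV, fun y hyV hyx => hxd ?_⟩
  have hyx_d := congrFun hyx d.succ
  rw [Fin.cons_succ] at hyx_d
  rw [← hyx_d]
  by_cases hd1 : d.val + 1 < n
  · have hsucc : d.succ = Fin.castSucc ⟨d.val + 1, hd1⟩ := Fin.ext rfl
    rw [hsucc, Fin.snoc_castSucc]
    by_contra hy
    have hle := hdmax ⟨d.val + 1, hd1⟩ (by simpa using ⟨y, hyV, hy⟩)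
    simp [Fin.le_def] at hle
  · have hsucc : d.succ = Fin.last n := Fin.ext (by simp only [Fin.val_succ, Fin.val_last]; omega)
    rw [hsucc, Fin.snoc_last]

theorem finrank_lt_of_snoc_zero_mem_of_cons_zero_mem {R : Type*} [Field R] {n : ℕ}
    {V : Submodule R (Fin n → R)} {W : Submodule R (Fin (n + 1) → R)} (hV : V ≠ ⊥)
    (hsnoc : ∀ x ∈ V, (Fin.snoc x 0 : Fin (n + 1) → R) ∈ W)
    (hcons : ∀ x ∈ V, (Fin.cons 0 x : Fin (n + 1) → R) ∈ W) :
    finrank R V < finrank R W := by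
  let pad : (Fin n → R) →ₗ[R] Fin (n + 1) → R :=
    { toFun := fun x => Fin.snoc x 0
      map_add' := fun x y => by ext i; refine Fin.lastCases ?_ (fun i => ?_) i <;> simp
      map_smul' := fun c x => by ext i; refine Fin.lastCases ?_ (fun i => ?_) i <;> simp }
  have hpad : Function.Injective pad := fun x y hxy => funext fun i => by
    simpa [pad] using congrFun hxy i.castSucc
  obtain ⟨x, hxV, hx⟩ := exists_cons_zero_ne_snoc_zero hV
  have hxpad : (Fin.cons 0 x : Fin (n + 1) → R) ∉ V.map pad := by
    rintro ⟨y, hyV, hyx⟩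
    exact hx y hyV hyx
  calc finrank R V = finrank R (V.map pad) :=
        LinearEquiv.finrank_eq (equivMapOfInjective pad hpad V)
    _ < finrank R (V.map pad ⊔ R ∙ (Fin.cons 0 x : Fin (n + 1) → R) : Submodule R _) := by
        rw [finrank_sup_span_singleton hxpad]; omega
    _ ≤ finrank R W :=
        finrank_mono (sup_le (map_le_iff_le_comap.mpr fun y hy => hsnoc y hy)
          ((span_singleton_le_iff_mem _ _).mpr (hcons x hxV)))

section Hankel

variable {α : Type*} {N : ℕ}

theorem hankel_transpose (L K : ℕ) (h : L + K = N + 1) (p : Fin N → α) :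
    (hankel L K h p)ᵀ = hankel K L (by omega) p := by
  ext i j
  exact congrArg p (Fin.ext (Nat.add_comm _ _))

theorem hankel_succ_submatrix_castSucc {L K : ℕ} (h : L + (K + 1) = N + 1) (p : Fin N → α) :
    (hankel (L + 1) K (by omega) p).submatrix Fin.castSucc id =
      (hankel L (K + 1) h p).submatrix id Fin.castSucc :=
  rfl

theorem hankel_succ_submatrix_succ {L K : ℕ} (h : L + (K + 1) = N + 1) (p : Fin N → α) :
    (hankel (L + 1) K (by omega) p).submatrix Fin.succ id =
      (hankel L (K + 1) h p).submatrix id Fin.succ := by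
  ext i j
  exact congrArg p (Fin.ext (by simp only [id, Fin.val_succ]; omega))

variable {R : Type*} [Field R]

theorem rank_hankel_swap {L K : ℕ} (h : L + K = N + 1) (p : Fin N → R) :
    (hankel L K h p).rank = (hankel K L (by omega) p).rank := by
  rw [← rank_transpose, hankel_transpose]

theorem snoc_zero_vecMul_hankel_eq_zero {L K : ℕ} (h : L + (K + 1) = N + 1) (p : Fin N → R)
    {x : Fin L → R} (hx : x ᵥ* hankel L (K + 1) h p = 0) :
    (Fin.snoc x 0 : Fin (L + 1) → R) ᵥ* hankel (L + 1) K (by omega) p = 0 := by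
  rw [snoc_zero_vecMul, hankel_succ_submatrix_castSucc h, vecMul_submatrix_id, hx]
  rfl

theorem cons_zero_vecMul_hankel_eq_zero {L K : ℕ} (h : L + (K + 1) = N + 1) (p : Fin N → R)
    {x : Fin L → R} (hx : x ᵥ* hankel L (K + 1) h p = 0) :
    (Fin.cons 0 x : Fin (L + 1) → R) ᵥ* hankel (L + 1) K (by omega) p = 0 := by
  rw [cons_zero_vecMul, hankel_succ_submatrix_succ h, vecMul_submatrix_id, hx]
  rfl

theorem rank_hankel_succ_le_of_rank_lt_height {L K : ℕ} (h : L + (K + 1) = N + 1)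
    (p : Fin N → R) (hL : (hankel L (K + 1) h p).rank < L) :
    (hankel (L + 1) K (by omega) p).rank ≤ (hankel L (K + 1) h p).rank := by
  have hA := rank_add_finrank_ker_vecMulLinear (hankel L (K + 1) h p)
  have hB := rank_add_finrank_ker_vecMulLinear (hankel (L + 1) K (by omega) p)
  rw [Fintype.card_fin] at hA hB
  have hker : LinearMap.ker (hankel L (K + 1) h p).vecMulLinear ≠ ⊥ := by
    intro hbot
    rw [hbot, finrank_bot] at hA
    omega
  have hlt := finrank_lt_of_snoc_zero_mem_of_cons_zero_mem hker
    (W := LinearMap.ker (hankel (L + 1) K (by omega) p).vecMulLinear)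
    (fun _ hx => snoc_zero_vecMul_hankel_eq_zero h p hx)
    (fun _ hx => cons_zero_vecMul_hankel_eq_zero h p hx)
  omega

theorem rank_hankel_le_of_rank_lt_width {L K : ℕ} (h : L + 1 + K = N + 1)
    (p : Fin N → R) (hK : (hankel (L + 1) K h p).rank < K) :
    (hankel L (K + 1) (by omega) p).rank ≤ (hankel (L + 1) K h p).rank := by
  rw [rank_hankel_swap h p] at hK ⊢
  rw [rank_hankel_swap _ p]
  exact rank_hankel_succ_le_of_rank_lt_height _ p hK

theorem rank_hankel_eq_of_rank_lt {L K : ℕ} (h : L + 1 + K = N + 1) (p : Fin N → R)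
    (hL : (hankel (L + 1) K h p).rank < L) (hK : (hankel (L + 1) K h p).rank < K) :
    (hankel L (K + 1) (by omega) p).rank = (hankel (L + 1) K h p).rank :=
  le_antisymm (rank_hankel_le_of_rank_lt_width h p hK)
    (rank_hankel_succ_le_of_rank_lt_height _ p
      ((rank_hankel_le_of_rank_lt_width h p hK).trans_lt hL))

theorem rank_hankel_eq_of_le {L₀ K₀ : ℕ} (h₀ : L₀ + K₀ = N + 1) (p : Fin N → R)
    (hK₀ : (hankel L₀ K₀ h₀ p).rank < K₀) {L K : ℕ} (h : L + K = N + 1)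
    (hL : (hankel L₀ K₀ h₀ p).rank < L) (hLL₀ : L ≤ L₀) :
    (hankel L K h p).rank = (hankel L₀ K₀ h₀ p).rank := by
  induction hLL₀ using Nat.decreasingInduction generalizing K with
  | self =>
    obtain rfl : K = K₀ := by omega
    rfl
  | of_succ m hm ih =>
    obtain ⟨K, rfl⟩ : ∃ K', K = K' + 1 := ⟨K - 1, by omega⟩
    have hrank := ih (K := K) (by omega) (by omega)
    rw [← hrank]
    exact rank_hankel_eq_of_rank_lt _ p (by omega) (by omega)

end Hankel

/-- If `p ∈ ℂ^N` satisfies `rank H_L(p) ≤ r < min (L, N − L + 1)` for some window length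
`L`, then `rank H_L(p) = rank H_{r+1}(p)`: rank-deficiency of one Hankel window implies
the `(r+1)`-row Hankel matrix of the same sequence has the same rank. -/
theorem rank_deficient_hankel_rank_eq (N L r : ℕ)
    (hr1 : r < L) (hr2 : r < N + 1 - L) (p : Fin N → ℂ)
    (hrk : (hankel L (N + 1 - L) (by omega) p).rank ≤ r) :
    (hankel L (N + 1 - L) (by omega) p).rank =
      (hankel (r + 1) (N - r) (by omega) p).rank :=
  (rank_hankel_eq_of_le _ p (by omega) _ (by omega) hr1).symm
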